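/- Let (q,t,ε) be a good triple with q > t ≥ 2. Let δ ∈ {0,1} with δ ≡ t (mod 2), t₁ = t−1+δ and t₂ = t−δ. Then M_{q,t,ε} = max{ (t₂+1)(q−1)/(1−2ε), t₁(t₁+1)(q−1)/(q−(1+2ε)t₁) }. -/

import Mathlib

/-- `(q,t,ε)` is a good triple. -/
def GoodTriple (q t : ℕ) (ε : ℝ) : Prop :=
  ∀ t' : ℕ, 2 ≤ t' → t' ≤ t →
    ∃ s : ℕ, 1 ≤ s ∧ s ≤ t' ∧
      (t' : ℝ) / 2 - (1 - 2 * ε) * (t' : ℝ) / (2 * (q : ℝ)) < (s : ℝ) ∧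
      (s : ℝ) < (t' : ℝ) / 2 + 1 - (1 + 2 * ε) * (t' : ℝ) / (2 * (q : ℝ))

/-- `M_{q,t,ε}`: the maximum over `2 ≤ t' ≤ t` of
`t'(t'+1)(q−1)/(2 s_{t'} q − t'(q−1+2ε))` and `t'(t'+1)(q−1)/(t'(q−1−2ε) − 2(s_{t'}−1)q)`,
where `s_{t'}` is the (unique, for a good triple) integer in `[1,t']` lying in the
interval `(t'/2 − (1−2ε)t'/(2q), t'/2 + 1 − (1+2ε)t'/(2q))`. -/
noncomputable def Mval (q t : ℕ) (ε : ℝ) : ℝ :=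
  sSup {M : ℝ | ∃ t' s : ℕ, 2 ≤ t' ∧ t' ≤ t ∧ 1 ≤ s ∧ s ≤ t' ∧
    ((t' : ℝ) / 2 - (1 - 2 * ε) * (t' : ℝ) / (2 * (q : ℝ)) < (s : ℝ) ∧
      (s : ℝ) < (t' : ℝ) / 2 + 1 - (1 + 2 * ε) * (t' : ℝ) / (2 * (q : ℝ))) ∧
    (M = (t' : ℝ) * ((t' : ℝ) + 1) * ((q : ℝ) - 1) /
        (2 * (s : ℝ) * (q : ℝ) - (t' : ℝ) * ((q : ℝ) - 1 + 2 * ε)) ∨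
     M = (t' : ℝ) * ((t' : ℝ) + 1) * ((q : ℝ) - 1) /
        ((t' : ℝ) * ((q : ℝ) - 1 - 2 * ε) - 2 * ((s : ℝ) - 1) * (q : ℝ)))}


/-!
For an admissible `s` the window `(t'/2 − (1−2ε)t'/(2q), t'/2 + 1 − (1+2ε)t'/(2q))` has length
less than `1` and contains `t'/2` or `(t'+1)/2`, so `2s ∈ {t', t'+1}`. For even `t'` the two
quantities become `(t'+1)(q−1)/(1−2ε)` and something smaller; for odd `t'` they become
`t'(t'+1)(q−1)/(q−(1+2ε)t')` and something smaller. Both closed forms increase with `t'`, so the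
maximum is reached at the largest even `t₂ ≤ t` or the largest odd `t₁ ≤ t`. For `t = 2` there is
no odd `t' ∈ [2, t]`, but then the odd term at `t₁ = 1` is dominated by the even one.
-/

def Admissible (q : ℕ) (ε : ℝ) (n s : ℕ) : Prop :=
  (n : ℝ) / 2 - (1 - 2 * ε) * (n : ℝ) / (2 * (q : ℝ)) < (s : ℝ) ∧
    (s : ℝ) < (n : ℝ) / 2 + 1 - (1 + 2 * ε) * (n : ℝ) / (2 * (q : ℝ))

noncomputable def candidate₁ (q : ℕ) (ε : ℝ) (n s : ℕ) : ℝ :=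
  (n : ℝ) * ((n : ℝ) + 1) * ((q : ℝ) - 1) /
    (2 * (s : ℝ) * (q : ℝ) - (n : ℝ) * ((q : ℝ) - 1 + 2 * ε))

noncomputable def candidate₂ (q : ℕ) (ε : ℝ) (n s : ℕ) : ℝ :=
  (n : ℝ) * ((n : ℝ) + 1) * ((q : ℝ) - 1) /
    ((n : ℝ) * ((q : ℝ) - 1 - 2 * ε) - 2 * ((s : ℝ) - 1) * (q : ℝ))

def Candidates (q t : ℕ) (ε : ℝ) : Set ℝ :=
  {M | ∃ n s : ℕ, 2 ≤ n ∧ n ≤ t ∧ 1 ≤ s ∧ s ≤ n ∧ Admissible q ε n s ∧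
    (M = candidate₁ q ε n s ∨ M = candidate₂ q ε n s)}

theorem Mval_eq_sSup_candidates (q t : ℕ) (ε : ℝ) : Mval q t ε = sSup (Candidates q t ε) := rfl

noncomputable def evenValue (q : ℕ) (ε x : ℝ) : ℝ :=
  (x + 1) * ((q : ℝ) - 1) / (1 - 2 * ε)

noncomputable def oddValue (q : ℕ) (ε x : ℝ) : ℝ :=
  x * (x + 1) * ((q : ℝ) - 1) / ((q : ℝ) - (1 + 2 * ε) * x)

section

variable {q t n s : ℕ} {ε : ℝ}

theorem Admissible.two_mul_eq_or (h : Admissible q ε n s) (hε : 0 ≤ ε) (hn : 0 < n)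
    (hnq : n < q) : 2 * s = n ∨ 2 * s = n + 1 := by
  obtain ⟨hlo, hhi⟩ := h
  have hnq' : (n : ℝ) < q := by exact_mod_cast hnq
  have hn' : (0 : ℝ) < n := by exact_mod_cast hn
  have hq : (0 : ℝ) < 2 * q := by linarith
  have hlo' : (1 - 2 * ε) * n / (2 * q) < 1 / 2 := by rw [div_lt_iff₀ hq]; nlinarith
  have hhi' : 0 < (1 + 2 * ε) * n / (2 * q) := div_pos (mul_pos (by linarith) hn') hq
  have h₁ : n < 2 * s + 1 := by exact_mod_cast (by linarith : (n : ℝ) < 2 * s + 1)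
  have h₂ : 2 * s < n + 2 := by exact_mod_cast (by linarith : (2 * s : ℝ) < n + 2)
  omega

theorem Admissible.odd_denom_pos (h : Admissible q ε n s) (hs : 2 * s = n + 1) (hq : 0 < q) :
    0 < (q : ℝ) - (1 + 2 * ε) * n := by
  have hs' : (2 * s : ℝ) = n + 1 := by exact_mod_cast hs
  have hq' : (0 : ℝ) < 2 * q := by positivity
  have hlt : (1 + 2 * ε) * n / (2 * q) < 1 / 2 := by linarith [h.2]
  rw [div_lt_iff₀ hq'] at hlt
  linarith

theorem candidate₁_eq_evenValue (hs : 2 * s = n) (hn : 0 < n) :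
    candidate₁ q ε n s = evenValue q ε n := by
  have hs' : (2 * s : ℝ) = n := by exact_mod_cast hs
  have hn' : (n : ℝ) ≠ 0 := by positivity
  have hden : 2 * (s : ℝ) * q - n * (q - 1 + 2 * ε) = n * (1 - 2 * ε) := by
    linear_combination (q : ℝ) * hs'
  rw [candidate₁, hden, evenValue, mul_assoc, mul_div_mul_left _ _ hn']

theorem candidate₂_le_evenValue (hs : 2 * s = n) (hn : 0 < n) (hnq : n ≤ q) (hε : ε < 1 / 2) :
    candidate₂ q ε n s ≤ evenValue q ε n := by
  have hs' : (2 * s : ℝ) = n := by exact_mod_cast hs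
  have hn' : (0 : ℝ) < n := by exact_mod_cast hn
  have hnq' : (n : ℝ) ≤ q := by exact_mod_cast hnq
  have hden₁ : 2 * (s : ℝ) * q - n * (q - 1 + 2 * ε) = n * (1 - 2 * ε) := by
    linear_combination (q : ℝ) * hs'
  have hden₂ : (n : ℝ) * (q - 1 - 2 * ε) - 2 * (s - 1) * q = 2 * q - (1 + 2 * ε) * n := by
    linear_combination (-(q : ℝ)) * hs'
  rw [candidate₂, hden₂, ← candidate₁_eq_evenValue hs hn, candidate₁, hden₁]
  have hq' : (0 : ℝ) ≤ q - 1 := by rw [sub_nonneg]; exact_mod_cast hn.trans_le hnq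
  apply div_le_div_of_nonneg_left
  · positivity
  · nlinarith
  · nlinarith

theorem candidate₂_eq_oddValue (hs : 2 * s = n + 1) : candidate₂ q ε n s = oddValue q ε n := by
  have hs' : (2 * s : ℝ) = n + 1 := by exact_mod_cast hs
  have hden : (n : ℝ) * (q - 1 - 2 * ε) - 2 * (s - 1) * q = q - (1 + 2 * ε) * n := by
    linear_combination (-(q : ℝ)) * hs'
  rw [candidate₂, hden, oddValue]

theorem candidate₁_le_oddValue (hs : 2 * s = n + 1) (hpos : 0 < (q : ℝ) - (1 + 2 * ε) * n)
    (hq : 1 ≤ q) : candidate₁ q ε n s ≤ oddValue q ε n := by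
  have hs' : (2 * s : ℝ) = n + 1 := by exact_mod_cast hs
  have hq' : (1 : ℝ) ≤ q := by exact_mod_cast hq
  have hden : 2 * (s : ℝ) * q - n * (q - 1 + 2 * ε) = q - (1 + 2 * ε) * n + 2 * n := by
    linear_combination (q : ℝ) * hs'
  rw [candidate₁, hden, oddValue]
  apply div_le_div_of_nonneg_left
  · have : (0 : ℝ) ≤ q - 1 := by linarith
    positivity
  · exact hpos
  · linarith [(Nat.cast_nonneg n : (0 : ℝ) ≤ n)]

theorem evenValue_mono (hq : 1 ≤ q) (hε : ε < 1 / 2) : Monotone (evenValue q ε) := by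
  intro x y hxy
  have hq' : (0 : ℝ) ≤ q - 1 := by rw [sub_nonneg]; exact_mod_cast hq
  unfold evenValue
  gcongr
  linarith

theorem oddValue_le_oddValue {x y : ℝ} (hx : 0 ≤ x) (hxy : x ≤ y)
    (hy : 0 < (q : ℝ) - (1 + 2 * ε) * y) (hε : 0 ≤ ε) (hq : 1 ≤ q) :
    oddValue q ε x ≤ oddValue q ε y := by
  have hq' : (0 : ℝ) ≤ q - 1 := by rw [sub_nonneg]; exact_mod_cast hq
  unfold oddValue
  have hy0 : 0 ≤ y := hx.trans hxy
  exact div_le_div₀ (by positivity) (by gcongr) hy (by nlinarith)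

theorem oddValue_one_le_evenValue_one (hq : 2 ≤ q) (hε : ε < 1 / 2) :
    oddValue q ε 1 ≤ evenValue q ε 1 := by
  have hq' : (2 : ℝ) ≤ q := by exact_mod_cast hq
  unfold oddValue evenValue
  rw [mul_one, one_mul]
  exact div_le_div_of_nonneg_left (by nlinarith) (by linarith) (by linarith)

theorem GoodTriple.exists_admissible (hgood : GoodTriple q t ε) (htq : t < q) (hε : 0 ≤ ε)
    (h2 : 2 ≤ n) (hnt : n ≤ t) :
    ∃ s, 1 ≤ s ∧ s ≤ n ∧ Admissible q ε n s ∧ (2 * s = n ∨ 2 * s = n + 1) := by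
  obtain ⟨s, hs1, hsn, hadm⟩ := hgood n h2 hnt
  exact ⟨s, hs1, hsn, hadm, Admissible.two_mul_eq_or hadm hε (by omega) (by omega)⟩

theorem GoodTriple.odd_denom_pos (hgood : GoodTriple q t ε) (htq : t < q) (hε : 0 ≤ ε)
    (h2 : 2 ≤ n) (hnt : n ≤ t) (hn : Odd n) : 0 < (q : ℝ) - (1 + 2 * ε) * n := by
  obtain ⟨s, -, -, hadm, hs⟩ := hgood.exists_admissible htq hε h2 hnt
  obtain ⟨r, rfl⟩ := hn
  exact hadm.odd_denom_pos (by omega) (by omega)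

theorem evenValue_max_oddValue_mem_upperBounds (htq : t < q) (hε0 : 0 ≤ ε) (hε : ε < 1 / 2)
    (hgood : GoodTriple q t ε) {n₁ n₂ : ℕ} (hn₁ : Odd n₁) (hn₁t : n₁ ≤ t) (htn₁ : t < n₁ + 2)
    (hn₂ : Even n₂) (htn₂ : t < n₂ + 2) :
    max (evenValue q ε n₂) (oddValue q ε n₁) ∈ upperBounds (Candidates q t ε) := by
  rintro M ⟨n, s, h2, hnt, -, -, hadm, hM⟩
  have hq : 1 ≤ q := by omega
  obtain ⟨r₁, rfl⟩ := hn₁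
  obtain ⟨r₂, rfl⟩ := hn₂
  rcases hadm.two_mul_eq_or hε0 (by omega) (by omega) with hs | hs
  · have hle : evenValue q ε n ≤ evenValue q ε ↑(r₂ + r₂) :=
      evenValue_mono hq hε (by exact_mod_cast (by omega : n ≤ r₂ + r₂))
    refine le_max_of_le_left ?_
    rcases hM with rfl | rfl
    · rw [candidate₁_eq_evenValue hs (by omega)]
      exact hle
    · exact (candidate₂_le_evenValue hs (by omega) (by omega) hε).trans hle
  · have hpos : 0 < (q : ℝ) - (1 + 2 * ε) * n := hadm.odd_denom_pos hs (by omega)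
    have hn₁ : n ≤ 2 * r₁ + 1 := by omega
    have hpos₁ : 0 < (q : ℝ) - (1 + 2 * ε) * ↑(2 * r₁ + 1) :=
      hgood.odd_denom_pos htq hε0 (by omega) (by omega) ⟨r₁, rfl⟩
    have hle : oddValue q ε n ≤ oddValue q ε ↑(2 * r₁ + 1) :=
      oddValue_le_oddValue (Nat.cast_nonneg n) (by exact_mod_cast hn₁) hpos₁ hε0 hq
    refine le_max_of_le_right ?_
    rcases hM with rfl | rfl
    · exact (candidate₁_le_oddValue hs hpos hq).trans hle
    · rw [candidate₂_eq_oddValue hs]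
      exact hle

theorem evenValue_max_oddValue_mem_candidates (ht : 2 ≤ t) (htq : t < q) (hε0 : 0 ≤ ε)
    (hε : ε < 1 / 2) (hgood : GoodTriple q t ε) {n₁ n₂ : ℕ} (hn₁ : Odd n₁) (hn₁t : n₁ ≤ t)
    (hn₂ : Even n₂) (hn₂t : n₂ ≤ t) (htn₂ : t < n₂ + 2) :
    max (evenValue q ε n₂) (oddValue q ε n₁) ∈ Candidates q t ε := by
  obtain ⟨r₁, rfl⟩ := hn₁
  obtain ⟨r₂, rfl⟩ := hn₂
  have heven : evenValue q ε ↑(r₂ + r₂) ∈ Candidates q t ε := by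
    obtain ⟨s, hs1, hsn, hadm, hs⟩ := hgood.exists_admissible htq hε0 (by omega) hn₂t
    refine ⟨_, s, by omega, hn₂t, hs1, hsn, hadm, Or.inl ?_⟩
    rw [candidate₁_eq_evenValue (by omega) (by omega)]
  rcases le_total (oddValue q ε ↑(2 * r₁ + 1)) (evenValue q ε ↑(r₂ + r₂)) with hle | hle
  · rwa [max_eq_left hle]
  rw [max_eq_right hle]
  obtain hr₁ | hr₁ := Nat.eq_zero_or_pos r₁
  · have hodd_le : oddValue q ε ↑(2 * r₁ + 1) ≤ evenValue q ε ↑(r₂ + r₂) := by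
      rw [hr₁, show ((2 * 0 + 1 : ℕ) : ℝ) = 1 by norm_num]
      exact (oddValue_one_le_evenValue_one (by omega) hε).trans
        (evenValue_mono (by omega) hε (by exact_mod_cast (by omega : 1 ≤ r₂ + r₂)))
    rwa [← le_antisymm hle hodd_le]
  · obtain ⟨s, hs1, hsn, hadm, hs⟩ := hgood.exists_admissible htq hε0 (by omega) hn₁t
    refine ⟨_, s, by omega, hn₁t, hs1, hsn, hadm, Or.inr ?_⟩
    rw [candidate₂_eq_oddValue (by omega)]

theorem Mval_eq_max_evenValue_oddValue (ht : 2 ≤ t) (htq : t < q) (hε0 : 0 ≤ ε)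
    (hε : ε < 1 / 2) (hgood : GoodTriple q t ε) {n₁ n₂ : ℕ} (hn₁ : Odd n₁) (hn₁t : n₁ ≤ t)
    (htn₁ : t < n₁ + 2) (hn₂ : Even n₂) (hn₂t : n₂ ≤ t) (htn₂ : t < n₂ + 2) :
    Mval q t ε = max (evenValue q ε n₂) (oddValue q ε n₁) :=
  (Mval_eq_sSup_candidates q t ε).trans <| IsGreatest.csSup_eq
    ⟨evenValue_max_oddValue_mem_candidates ht htq hε0 hε hgood hn₁ hn₁t hn₂ hn₂t htn₂,
      evenValue_max_oddValue_mem_upperBounds htq hε0 hε hgood hn₁ hn₁t htn₁ hn₂ htn₂⟩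

end

theorem stmt10 (q t : ℕ) (ht : 2 ≤ t) (htq : t < q)
    (ε : ℝ) (hε0 : 0 < ε) (hε : ε < min ((q : ℝ) / (2 * (t : ℝ))) (1 / 2))
    (hgood : GoodTriple q t ε)
    (δ : ℕ) (hδ01 : δ = 0 ∨ δ = 1) (hδ : δ % 2 = t % 2) :
    Mval q t ε =
      max ((((t : ℝ) - (δ : ℝ)) + 1) * ((q : ℝ) - 1) / (1 - 2 * ε))
        (((t : ℝ) - 1 + (δ : ℝ)) * (((t : ℝ) - 1 + (δ : ℝ)) + 1) * ((q : ℝ) - 1) /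
          ((q : ℝ) - (1 + 2 * ε) * ((t : ℝ) - 1 + (δ : ℝ)))) := by
  have hn₁ : Odd (t - 1 + δ) := by rw [Nat.odd_iff]; omega
  have hn₂ : Even (t - δ) := by rw [Nat.even_iff]; omega
  have hcast₁ : ((t - 1 + δ : ℕ) : ℝ) = t - 1 + δ := by
    push_cast [Nat.cast_sub (by omega : 1 ≤ t)]; ring
  have hcast₂ : ((t - δ : ℕ) : ℝ) = t - δ := by
    push_cast [Nat.cast_sub (by omega : δ ≤ t)]; ring
  have h := Mval_eq_max_evenValue_oddValue ht htq hε0.le (lt_min_iff.mp hε).2 hgood hn₁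
    (by omega) (by omega) hn₂ (by omega) (by omega)
  rwa [hcast₁, hcast₂] at h
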